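/- arXiv:2402.11064 — 2 statements merged into one kernel-verified Lean document; each statement's English description precedes it below -/
import Mathlib

section
/- Let 2 < q < ∞, and let p_i > q, 1 ≤ p_j < 2. Define λ ∈ [0,1] by 1/q = (1−λ)/p_i + λ/p_j and μ ∈ [0,1] by 1/2 = (1−μ)/p_i + μ/p_j. Then for all r_i, r_j > 0, t_i, t_j ≥ 0 and t ≥ t_i + t_j ≥ 0 (with t ≥ 0), one has (1−μ) r_i t_i + μ r_j t_j + t/q − t/2 ≤ max{ (1−λ) r_i t_i + λ r_j t_j , r_j t_j + t/q − t/p_j }. -/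
/-- Inequality (16) of the paper: for `p_j < 2 < q < p_i`, with interpolation
parameters `λ` (level `1/q`) and `μ` (level `1/2`), the `μ`-combination with
correction `t/q - t/2` is dominated by the maximum of the `λ`-combination and
the `j`-th term with correction `t/q - t/p_j`. -/
theorem stmt2 (q pi pj lam mu : ℝ)
    (hq : 2 < q) (hpi : q < pi) (hpj1 : 1 ≤ pj) (hpj2 : pj < 2)
    (hlam0 : 0 ≤ lam) (hlam1 : lam ≤ 1)
    (hlam : 1 / q = (1 - lam) / pi + lam / pj)
    (hmu0 : 0 ≤ mu) (hmu1 : mu ≤ 1)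
    (hmu : 1 / 2 = (1 - mu) / pi + mu / pj) :
    ∀ ri rj ti tj t : ℝ, 0 < ri → 0 < rj → 0 ≤ ti → 0 ≤ tj → 0 ≤ t →
      ti + tj ≤ t →
      (1 - mu) * (ri * ti) + mu * (rj * tj) + t / q - t / 2 ≤
        max ((1 - lam) * (ri * ti) + lam * (rj * tj))
          (rj * tj + t / q - t / pj) := by
  have hq0 : (0:ℝ) < q := by linarith
  have hpi0 : (0:ℝ) < pi := by linarith
  have hpj0 : (0:ℝ) < pj := by linarith
  have e1 : 1/q - 1/pj = (1-lam) * (1/pi - 1/pj) := by linear_combination hlam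
  have e3 : 1/q - 1/2 = (mu-lam) * (1/pi - 1/pj) := by linear_combination hlam - hmu
  have hqpj : 1/q - 1/pj < 0 := by
    have h1 : 1/q < 1/pj := by
      apply one_div_lt_one_div_of_lt hpj0; linarith
    linarith
  have hq2 : 1/q - 1/2 < 0 := by
    have h1 : 1/q < 1/2 := by
      apply one_div_lt_one_div_of_lt; norm_num; exact hq
    linarith
  have hd : 1/pi - 1/pj < 0 := by
    have h1 : 1/pi < 1/pj := by
      apply one_div_lt_one_div_of_lt hpj0; linarith
    linarith
  have hlam' : 0 < 1 - lam := by nlinarith [e1]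
  have hmulam : 0 < mu - lam := by nlinarith [e3]
  set θ : ℝ := (mu - lam)/(1 - lam) with hθdef
  have hθ0 : 0 ≤ θ := le_of_lt (div_pos hmulam hlam')
  have hθ1 : θ ≤ 1 := by
    rw [div_le_one hlam']; linarith
  have hθ : θ * (1 - lam) = mu - lam := div_mul_cancel₀ _ (ne_of_gt hlam')
  have key : 1/q - 1/2 = θ * (1/q - 1/pj) := by
    rw [e1, e3, ← mul_assoc, hθ]
  intro ri rj ti tj t hri hrj hti htj ht hsum
  set X := (1 - lam) * (ri * ti) + lam * (rj * tj) with hX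
  set Y := rj * tj + t / q - t / pj with hY
  have heq : (1 - mu) * (ri * ti) + mu * (rj * tj) + t / q - t / 2
      = (1 - θ) * X + θ * Y := by
    rw [hX, hY]
    linear_combination (ri*ti - rj*tj) * hθ + t * key
  rw [heq]
  have h1 : (1 - θ) * X ≤ (1 - θ) * max X Y :=
    mul_le_mul_of_nonneg_left (le_max_left _ _) (by linarith)
  have h2 : θ * Y ≤ θ * max X Y :=
    mul_le_mul_of_nonneg_left (le_max_right _ _) hθ0
  linarith
end

section
/- Let 2 < q < ∞ and let p_1, …, p_d ∈ (1, ∞), r_1, …, r_d > 0. Define h on the simplex D = {α ∈ ℝ^d : α_j ≥ 0, ∑ α_j = 1} as in the case 1 < q ≤ 2 of Theorem 2 (with I_0 = {j : p_j ≥ q}, J_0 = {j : p_j ≤ q}, etc.), and define h̃ on D̃ = {(α, s) : 1 ≤ s ≤ q/2, α_j ≥ 0, ∑ α_j = s} as in case 2 of Theorem 2. Then for every (α_1, …, α_d, q/2) with α_j ≥ 0 and ∑ α_j = q/2, one has h̃(α_1, …, α_d, q/2) = (q/2) · h(2α_1/q, …, 2α_d/q); consequently min over {(α,s) ∈ D̃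 : s = q/2} of h̃ equals (q/2) · min_D h. -/
noncomputable section

/-- Interpolation parameter `λ_{ij}` at level `1/q` between `p i` and `p j`. -/
def lamP {d : ℕ} (p : Fin d → ℝ) (q : ℝ) (i j : Fin d) : ℝ :=
  (1 / p i - 1 / q) / (1 / p i - 1 / p j)

/-- Interpolation parameter `μ_{ij}` at level `1/2` between `p i` and `p j`. -/
def muP {d : ℕ} (p : Fin d → ℝ) (i j : Fin d) : ℝ :=
  (1 / p i - 1 / 2) / (1 / p i - 1 / p j)

/-- The function `h` from part 1 of Theorem 2 (with `max ∅ = -∞`, via `EReal`). -/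
def hFun {d : ℕ} (p r : Fin d → ℝ) (q : ℝ) (α : Fin d → ℝ) : EReal :=
  (⨆ j ∈ {j | q ≤ p j}, ((r j * α j : ℝ) : EReal)) ⊔
  (⨆ j ∈ {j | p j ≤ q}, ((r j * α j - 1 / p j + 1 / q : ℝ) : EReal)) ⊔
  (⨆ i ∈ {i | q < p i}, ⨆ j ∈ {j | p j < q},
    (((1 - lamP p q i j) * (r i * α i) + lamP p q i j * (r j * α j) : ℝ) : EReal))

/-- The function `h̃` from part 2 of Theorem 2 (with `max ∅ = -∞`, via `EReal`). -/
def hTilde {d : ℕ} (p r : Fin d → ℝ) (q : ℝ) (α : Fin d → ℝ) (s : ℝ) : EReal :=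
  (⨆ j ∈ {j | q ≤ p j}, ((r j * α j : ℝ) : EReal)) ⊔
  (⨆ j ∈ {j | 2 ≤ p j ∧ p j ≤ q},
    ((r j * α j - (1 / 2) * ((1 / p j - 1 / q) / (1 / 2 - 1 / q)) * (s - 1) : ℝ) : EReal)) ⊔
  (⨆ j ∈ {j | p j ≤ 2}, ((r j * α j - s / p j + 1 / 2 : ℝ) : EReal)) ⊔
  (⨆ i ∈ {i | q < p i}, ⨆ j ∈ {j | p j < q},
    (((1 - lamP p q i j) * (r i * α i) + lamP p q i j * (r j * α j) : ℝ) : EReal)) ⊔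
  (⨆ i ∈ {i | 2 < p i}, ⨆ j ∈ {j | p j < 2},
    (((1 - muP p i j) * (r i * α i) + muP p i j * (r j * α j) - s / 2 + 1 / 2 : ℝ) : EReal))

lemma strictMono_constMul (c : ℝ) (hc : 0 < c) :
    StrictMono (fun x : EReal => (c : EReal) * x) := by
  have h := EReal.strictMono_div_right_of_pos (b := ((c⁻¹ : ℝ) : EReal))
    (by exact_mod_cast inv_pos.2 hc) (by simp)
  have : (fun x : EReal => (c : EReal) * x) = fun x : EReal => x / ((c⁻¹ : ℝ) : EReal) := by
    funext x
    rw [EReal.div_eq_inv_mul, ← EReal.coe_inv, inv_inv]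
  rw [this]
  exact h

def mulIso (c : ℝ) (hc : 0 < c) : EReal ≃o EReal where
  toFun x := (c : EReal) * x
  invFun x := ((c⁻¹ : ℝ) : EReal) * x
  left_inv x := by
    show ((c⁻¹ : ℝ) : EReal) * ((c : EReal) * x) = x
    rw [← mul_assoc, ← EReal.coe_mul, inv_mul_cancel₀ hc.ne', EReal.coe_one, one_mul]
  right_inv x := by
    show ((c : ℝ) : EReal) * (((c⁻¹ : ℝ) : EReal) * x) = x
    rw [← mul_assoc, ← EReal.coe_mul, mul_inv_cancel₀ hc.ne', EReal.coe_one, one_mul]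
  map_rel_iff' := (strictMono_constMul c hc).le_iff_le

lemma mulIso_apply (c : ℝ) (hc : 0 < c) (x : EReal) : mulIso c hc x = (c : EReal) * x := rfl

lemma mul_biSup (c : ℝ) (hc : 0 < c) {ι : Type*} (s : Set ι) (f : ι → ℝ) :
    (c : EReal) * (⨆ j ∈ s, ((f j : ℝ) : EReal)) = ⨆ j ∈ s, ((c * f j : ℝ) : EReal) := by
  rw [← mulIso_apply c hc]
  simp only [OrderIso.map_iSup, mulIso_apply, ← EReal.coe_mul]

lemma mul_biSup₂ (c : ℝ) (hc : 0 < c) {ι : Type*} (s t : Set ι) (f : ι → ι → ℝ) :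
    (c : EReal) * (⨆ i ∈ s, ⨆ j ∈ t, ((f i j : ℝ) : EReal)) =
      ⨆ i ∈ s, ⨆ j ∈ t, ((c * f i j : ℝ) : EReal) := by
  rw [← mulIso_apply c hc]
  simp only [OrderIso.map_iSup, mulIso_apply, ← EReal.coe_mul]

lemma mul_supE (c : ℝ) (hc : 0 < c) (x y : EReal) :
    (c : EReal) * (x ⊔ y) = (c : EReal) * x ⊔ (c : EReal) * y := by
  rw [← mulIso_apply c hc, ← mulIso_apply c hc x, ← mulIso_apply c hc y, OrderIso.map_sup]

lemma cvx_le_max (θ U V : ℝ) (h0 : 0 ≤ θ) (h1 : θ ≤ 1) : (1 - θ) * U + θ * V ≤ max U V := by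
  rcases le_total U V with h | h
  · have : (1 - θ) * U + θ * V ≤ V := by nlinarith
    exact this.trans (le_max_right U V)
  · have : (1 - θ) * U + θ * V ≤ U := by nlinarith
    exact this.trans (le_max_left U V)

lemma ineq5a (a b x y c m : ℝ) (hx : x < 1/2) (hy : 1/2 < y)
    (hm : m = (1/2 - x)/(y - x)) :
    (1 - m) * a + m * b - c/2 + 1/2 ≤ max (a - c*x + 1/2) (b - c*y + 1/2) := by
  have hyx : (0:ℝ) < y - x := by linarith
  have hm0 : 0 ≤ m := hm ▸ div_nonneg (by linarith) (by linarith)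
  have hm1 : m ≤ 1 := by rw [hm, div_le_one hyx]; linarith
  have hkey : (1 - m)*x + m*y = 1/2 := by
    rw [hm]; field_simp; ring
  have G : (1 - m) * a + m * b - c/2 + 1/2
      = (1 - m) * (a - c*x + 1/2) + m * (b - c*y + 1/2) := by
    linear_combination c * hkey
  rw [G]
  exact cvx_le_max m _ _ hm0 hm1

lemma ineq5b (a b x y z c l m t : ℝ) (hxz : x ≤ z) (hz : z < 1/2) (hy : 1/2 < y)
    (hcz : c * z = 1/2)
    (hl : l = (z - x)/(y - x)) (hm : m = (1/2 - x)/(y - x)) (ht : t = (1/2 - z)/(y - z)) :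
    (1 - m) * a + m * b - c/2 + 1/2 ≤
      max ((1 - l) * a + l * b) (b - c*y + 1/2) := by
  have hyx : (0:ℝ) < y - x := by linarith
  have hyz : (0:ℝ) < y - z := by linarith
  have ht0 : 0 ≤ t := ht ▸ div_nonneg (by linarith) (by linarith)
  have ht1 : t ≤ 1 := by rw [ht, div_le_one hyz]; linarith
  have hK2 : (1 - t)*l + t = m := by
    rw [hl, hm, ht]; field_simp; ring
  have hK4 : t*(y - z) = 1/2 - z := by
    rw [ht]; field_simp
  have G : (1 - m) * a + m * b - c/2 + 1/2
      = (1 - t) * ((1 - l) * a + l * b) + t * (b - c*y + 1/2) := by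
    linear_combination (a - b) * hK2 + c * hK4 + (t - 1) * hcz
  rw [G]
  exact cvx_le_max t _ _ ht0 ht1

lemma sup_assembly {L : Type*} [Lattice L] (A B1 B2 C T : L)
    (h : T ≤ A ⊔ (B1 ⊔ B2) ⊔ C) :
    A ⊔ B1 ⊔ B2 ⊔ C ⊔ T = A ⊔ (B1 ⊔ B2) ⊔ C := by
  apply le_antisymm
  · simp only [sup_le_iff]
    exact ⟨⟨⟨⟨le_sup_of_le_left le_sup_left,
      le_sup_of_le_left (le_sup_of_le_right le_sup_left)⟩,
      le_sup_of_le_left (le_sup_of_le_right le_sup_right)⟩, le_sup_right⟩, h⟩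
  · simp only [sup_le_iff]
    exact ⟨⟨le_sup_of_le_left <| le_sup_of_le_left <| le_sup_of_le_left le_sup_left,
      le_sup_of_le_left <| le_sup_of_le_left <| le_sup_of_le_left le_sup_right,
      le_sup_of_le_left <| le_sup_of_le_left le_sup_right⟩,
      le_sup_of_le_left le_sup_right⟩

lemma hmain {d : ℕ} (q : ℝ) (hq : 2 < q) (p r : Fin d → ℝ)
    (hp : ∀ j, 1 < p j) (α : Fin d → ℝ) :
    hTilde p r q α (q / 2) = ((q / 2 : ℝ) : EReal) * hFun p r q (fun j => 2 * α j / q) := by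
  have hq0 : (0:ℝ) < q := by linarith
  have hq0' : q ≠ 0 := hq0.ne'
  have hq2 : q - 2 ≠ 0 := by intro h; linarith [sub_eq_zero.mp h]
  have hc : (0:ℝ) < q / 2 := by linarith
  have hp0 : ∀ j, (0:ℝ) < p j := fun j => lt_trans one_pos (hp j)
  have hp0' : ∀ j, p j ≠ 0 := fun j => (hp0 j).ne'
  simp only [hTilde, hFun]
  rw [mul_supE _ hc, mul_supE _ hc, mul_biSup _ hc, mul_biSup _ hc, mul_biSup₂ _ hc]
  -- normalize RHS families
  have e1 : (⨆ j ∈ {j : Fin d | q ≤ p j}, ((q / 2 * (r j * (2 * α j / q)) : ℝ) : EReal))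
      = ⨆ j ∈ {j : Fin d | q ≤ p j}, ((r j * α j : ℝ) : EReal) := by
    refine iSup_congr fun j => iSup_congr fun hj => ?_
    norm_cast
    field_simp
  have e2 : (⨆ j ∈ {j : Fin d | p j ≤ q},
        ((q / 2 * (r j * (2 * α j / q) - 1 / p j + 1 / q) : ℝ) : EReal))
      = ⨆ j ∈ {j : Fin d | p j ≤ q}, ((r j * α j - q / 2 / p j + 1 / 2 : ℝ) : EReal) := by
    refine iSup_congr fun j => iSup_congr fun hj => ?_
    norm_cast
    field_simp
  have e3 : (⨆ i ∈ {i : Fin d | q < p i}, ⨆ j ∈ {j : Fin d | p j < q},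
        ((q / 2 * ((1 - lamP p q i j) * (r i * (2 * α i / q))
          + lamP p q i j * (r j * (2 * α j / q))) : ℝ) : EReal))
      = ⨆ i ∈ {i : Fin d | q < p i}, ⨆ j ∈ {j : Fin d | p j < q},
        (((1 - lamP p q i j) * (r i * α i) + lamP p q i j * (r j * α j) : ℝ) : EReal) := by
    refine iSup_congr fun i => iSup_congr fun hi => iSup_congr fun j => iSup_congr fun hj => ?_
    norm_cast
    field_simp
  rw [e1, e2, e3]
  -- normalize the second family of hTilde
  have e4 : (⨆ j ∈ {j : Fin d | 2 ≤ p j ∧ p j ≤ q},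
        ((r j * α j - 1 / 2 * ((1 / p j - 1 / q) / (1 / 2 - 1 / q)) * (q / 2 - 1) : ℝ) : EReal))
      = ⨆ j ∈ {j : Fin d | 2 ≤ p j ∧ p j ≤ q},
        ((r j * α j - q / 2 / p j + 1 / 2 : ℝ) : EReal) := by
    refine iSup_congr fun j => iSup_congr fun hj => ?_
    norm_cast
    have h2q : (1:ℝ)/2 - 1/q ≠ 0 := by
      rw [div_sub_div _ _ two_ne_zero hq0', div_ne_zero_iff]
      constructor
      · intro h; apply hq2; linarith [h]
      · positivity
    field_simp
    ring
  rw [e4]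
  -- split the B family as a union
  have hsplit : (⨆ j ∈ {j : Fin d | p j ≤ q}, ((r j * α j - q / 2 / p j + 1 / 2 : ℝ) : EReal))
      = (⨆ j ∈ {j : Fin d | 2 ≤ p j ∧ p j ≤ q}, ((r j * α j - q / 2 / p j + 1 / 2 : ℝ) : EReal))
        ⊔ (⨆ j ∈ {j : Fin d | p j ≤ 2}, ((r j * α j - q / 2 / p j + 1 / 2 : ℝ) : EReal)) := by
    rw [← iSup_union]
    apply le_antisymm
    · refine iSup₂_le fun j hj => ?_
      rcases le_total 2 (p j) with h2 | h2
      · exact le_iSup₂_of_le j (Or.inl ⟨h2, hj⟩) le_rfl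
      · exact le_iSup₂_of_le j (Or.inr h2) le_rfl
    · refine iSup₂_le fun j hj => ?_
      rcases hj with h | h
      · exact le_iSup₂_of_le j h.2 le_rfl
      · exact le_iSup₂_of_le j (le_trans h (le_of_lt hq)) le_rfl
  rw [hsplit]
  -- the fifth family is dominated
  have h5 : (⨆ i ∈ {i : Fin d | 2 < p i}, ⨆ j ∈ {j : Fin d | p j < 2},
        (((1 - muP p i j) * (r i * α i) + muP p i j * (r j * α j) - q / 2 / 2 + 1 / 2 : ℝ) : EReal))
      ≤ (⨆ j ∈ {j : Fin d | q ≤ p j}, ((r j * α j : ℝ) : EReal))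
        ⊔ (⨆ j ∈ {j : Fin d | p j ≤ q}, ((r j * α j - q / 2 / p j + 1 / 2 : ℝ) : EReal))
        ⊔ (⨆ i ∈ {i : Fin d | q < p i}, ⨆ j ∈ {j : Fin d | p j < q},
            (((1 - lamP p q i j) * (r i * α i) + lamP p q i j * (r j * α j) : ℝ) : EReal)) := by
    refine iSup₂_le fun i hi => iSup₂_le fun j hj => ?_
    have hi2 : (2:ℝ) < p i := hi
    have hj2 : p j < 2 := hj
    have hx : 1 / p i < 1/2 := by
      rw [div_lt_div_iff₀ (hp0 i) two_pos]; linarith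
    have hy : (1:ℝ)/2 < 1 / p j := by
      rw [div_lt_div_iff₀ two_pos (hp0 j)]; linarith
    have hz : (1:ℝ) / q < 1/2 := by
      rw [div_lt_div_iff₀ hq0 two_pos]; linarith
    have hmu : muP p i j = (1/2 - 1/p i)/(1/p j - 1/p i) := by
      rw [muP, ← neg_div_neg_eq]; ring_nf
    have hcz : (q/2) * (1/q) = 1/2 := by field_simp
    have hBi : r i * α i - q/2 * (1/p i) + 1/2 = r i * α i - q / 2 / p i + 1/2 := by
      rw [mul_one_div]
    have hBj : r j * α j - q/2 * (1/p j) + 1/2 = r j * α j - q / 2 / p j + 1/2 := by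
      rw [mul_one_div]
    rcases lt_or_ge (p i) q with hiq | hqi
    · -- 2 < p i < q : use B-terms at i and j
      have hkey := ineq5a (r i * α i) (r j * α j) (1/p i) (1/p j) (q/2) (muP p i j) hx hy hmu
      rw [hBi, hBj] at hkey
      refine le_trans (EReal.coe_le_coe_iff.mpr hkey) ?_
      rcases max_cases (r i * α i - q / 2 / p i + 1/2) (r j * α j - q / 2 / p j + 1/2) with
        ⟨hmax, _⟩ | ⟨hmax, _⟩ <;> rw [hmax]
      · exact le_sup_of_le_left <| le_sup_of_le_right <|
          le_iSup₂_of_le i (le_of_lt hiq) le_rfl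
      · exact le_sup_of_le_left <| le_sup_of_le_right <|
          le_iSup₂_of_le j (by linarith : p j ≤ q) le_rfl
    · -- q ≤ p i : use the λ-interpolated term and the B-term at j
      have hxz : 1 / p i ≤ 1 / q := one_div_le_one_div_of_le hq0 hqi
      have hlam : lamP p q i j = (1/q - 1/p i)/(1/p j - 1/p i) := by
        rw [lamP, ← neg_div_neg_eq]; ring_nf
      have hkey := ineq5b (r i * α i) (r j * α j) (1/p i) (1/p j) (1/q) (q/2)
        (lamP p q i j) (muP p i j) ((1/2 - 1/q)/(1/p j - 1/q)) hxz hz hy hcz hlam hmu rfl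
      rw [hBj] at hkey
      refine le_trans (EReal.coe_le_coe_iff.mpr hkey) ?_
      rcases max_cases ((1 - lamP p q i j) * (r i * α i) + lamP p q i j * (r j * α j))
        (r j * α j - q / 2 / p j + 1/2) with ⟨hmax, _⟩ | ⟨hmax, _⟩ <;> rw [hmax]
      · rcases hqi.lt_or_eq with hlt | heq
        · exact le_sup_of_le_right <|
            le_iSup₂_of_le i hlt <| le_iSup₂_of_le j (by linarith : p j < q) le_rfl
        · have hlam0 : lamP p q i j = 0 := by
            rw [lamP, heq, sub_self, zero_div]
          have hsimp : (1 - lamP p q i j) * (r i * α i) + lamP p q i j * (r j * α j)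
              = r i * α i := by rw [hlam0]; ring
          rw [hsimp]
          exact le_sup_of_le_left <| le_sup_of_le_left <|
            le_iSup₂_of_le i (le_of_eq heq) le_rfl
      · exact le_sup_of_le_left <| le_sup_of_le_right <|
          le_iSup₂_of_le j (by linarith : p j ≤ q) le_rfl
  exact sup_assembly _ _ _ _ _ (hsplit ▸ h5)

lemma mul_sInf (c : ℝ) (hc : 0 < c) (T : Set EReal) :
    sInf ((fun x => (c : EReal) * x) '' T) = (c : EReal) * sInf T := by
  rw [sInf_image, ← mulIso_apply c hc]
  rw [OrderIso.map_sInf]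
  rfl


/-- On the slice `s = q/2`, `h̃(α, q/2) = (q/2)·h(2α/q)`; consequently the minimum of
`h̃` over the slice equals `(q/2)` times the minimum of `h` over the simplex `D`. -/
theorem stmt19 (d : ℕ) (q : ℝ) (hq : 2 < q) (p r : Fin d → ℝ)
    (hp : ∀ j, 1 < p j) (hr : ∀ j, 0 < r j) :
    (∀ α : Fin d → ℝ, (∀ j, 0 ≤ α j) → (∑ j, α j) = q / 2 →
      hTilde p r q α (q / 2) = ((q / 2 : ℝ) : EReal) * hFun p r q (fun j => 2 * α j / q)) ∧
    sInf (Set.image (fun α => hTilde p r q α (q / 2))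
        {α : Fin d → ℝ | (∀ j, 0 ≤ α j) ∧ (∑ j, α j) = q / 2}) =
      ((q / 2 : ℝ) : EReal) * sInf (Set.image (hFun p r q)
        {α : Fin d → ℝ | (∀ j, 0 ≤ α j) ∧ (∑ j, α j) = 1}) := by
  have hq0 : (0:ℝ) < q := by linarith
  have hc : (0:ℝ) < q / 2 := by linarith
  constructor
  · intro α _ _
    exact hmain q hq p r hp α
  · have himg : Set.image (fun α => hTilde p r q α (q / 2))
        {α : Fin d → ℝ | (∀ j, 0 ≤ α j) ∧ (∑ j, α j) = q / 2}
        = (fun x => ((q / 2 : ℝ) : EReal) * x) '' (Set.image (hFun p r q)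
            {α : Fin d → ℝ | (∀ j, 0 ≤ α j) ∧ (∑ j, α j) = 1}) := by
      ext e
      simp only [Set.mem_image, Set.mem_setOf_eq]
      constructor
      · rintro ⟨α, ⟨hα0, hαs⟩, rfl⟩
        refine ⟨hFun p r q (fun j => 2 * α j / q),
          ⟨fun j => 2 * α j / q, ⟨fun j => div_nonneg (by linarith [hα0 j]) hq0.le, ?_⟩, rfl⟩,
          (hmain q hq p r hp α).symm⟩
        have : ∀ j, 2 * α j / q = α j * (2 / q) := fun j => by ring
        simp only [this, ← Finset.sum_mul, hαs]
        field_simp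
      · rintro ⟨x, ⟨β, ⟨hβ0, hβs⟩, rfl⟩, rfl⟩
        refine ⟨fun j => q / 2 * β j, ⟨fun j => mul_nonneg hc.le (hβ0 j), ?_⟩, ?_⟩
        · simp only [← Finset.mul_sum, hβs, mul_one]
        · have hβ : (fun j => 2 * (q / 2 * β j) / q) = β := by
            funext j; field_simp
          rw [hmain q hq p r hp, hβ]
    rw [himg, mul_sInf _ hc]

end
end
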